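/- arXiv:0901.4628 — 2 statements merged into one kernel-verified Lean document; each statement's English description precedes it below -/
import Mathlib

section
/- As n → ∞, s_n^{−2} Σ_{i=1}^n (Z_i − Z̄_n)² converges to 1 in probability; that is, for every ε > 0, P( | s_n^{−2} Σ_{i=1}^n (Z_i − Z̄_n)² − 1 | ≥ ε ) → 0, where Z̄_n := n^{−1} Σ_{i=1}^n Z_i. -/
open MeasureTheory ProbabilityTheory Filter Finset
open scoped Topology

/-!
Since `∑ (Z_i - Z̄)² = ∑ Z_i² - (∑ Z_i)² / n` and `E (∑ Z_i)² = s_n²`, the second term contributes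
`1 / n` in `L¹` after normalisation, so it suffices to show `s_n⁻² ∑ Z_i² → 1` in `L¹`, which
implies convergence in probability. Split `Z_i² = W_i + T_i` at the level `δ² s_n²`, with `W_i`
the part below it. The `W_i` are independent with `Var W_i ≤ δ² s_n² σ_i²`, so `∑ W_i` deviates
from its mean by at most `δ s_n²` in `L¹`, while the nonnegative `T_i` have total mean
`s_n² L_n(δ)`, the Lindeberg sum. Hence `E |s_n⁻² ∑ (Z_i - Z̄)² - 1| ≤ δ + 2 L_n(δ) + 1 / n`
for every `δ > 0`.
-/

theorem Finset.sum_sub_average_sq {ι : Type*} (t : Finset ι) (x : ι → ℝ) :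
    ∑ i ∈ t, (x i - (∑ j ∈ t, x j) / #t) ^ 2 = ∑ i ∈ t, x i ^ 2 - (∑ i ∈ t, x i) ^ 2 / #t := by
  rcases t.eq_empty_or_nonempty with rfl | ht
  · simp
  have : (#t : ℝ) ≠ 0 := by exact_mod_cast ht.card_pos.ne'
  simp only [sub_sq, sum_add_distrib, sum_sub_distrib, sum_const, nsmul_eq_mul, ← sum_mul,
    ← mul_sum]
  field_simp
  ring

theorem tendstoInMeasure_of_tendsto_integral_abs_sub {Ω ι : Type*} [MeasurableSpace Ω]
    {P : Measure Ω} {l : Filter ι} {f : ι → Ω → ℝ} {g : Ω → ℝ} (hf : ∀ i, Integrable (f i) P)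
    (hg : Integrable g P) (h : Tendsto (fun i => ∫ ω, |f i ω - g ω| ∂P) l (𝓝 0)) :
    TendstoInMeasure P f l g := by
  refine tendstoInMeasure_of_tendsto_eLpNorm one_ne_zero (fun i => (hf i).aestronglyMeasurable)
    hg.aestronglyMeasurable ?_
  have hnorm : ∀ i, eLpNorm (f i - g) 1 P = ENNReal.ofReal (∫ ω, |f i ω - g ω| ∂P) := fun i => by
    rw [eLpNorm_one_eq_lintegral_enorm, ← ofReal_integral_norm_eq_lintegral_enorm ((hf i).sub hg)]
    rfl
  simpa only [hnorm, ENNReal.ofReal_zero] using ENNReal.tendsto_ofReal h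

theorem tendsto_zero_of_forall_eventually_le_add {a : ℕ → ℝ} {b : ℝ → ℕ → ℝ}
    (ha : ∀ n, 0 ≤ a n) (hb : ∀ δ > 0, Tendsto (b δ) atTop (𝓝 0))
    (hab : ∀ δ > 0, ∀ᶠ n in atTop, a n ≤ δ + b δ n) : Tendsto a atTop (𝓝 0) := by
  refine tendsto_order.2 ⟨fun η hη => .of_forall fun n => hη.trans_le (ha n), fun η hη => ?_⟩
  filter_upwards [hab (η / 2) (half_pos hη),
    (hb (η / 2) (half_pos hη)).eventually (gt_mem_nhds (half_pos hη))] with n h1 h2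
  linarith

theorem integrable_sum_sub_average_sq {Ω ι : Type*} [MeasurableSpace Ω] {P : Measure Ω}
    [IsFiniteMeasure P] {t : Finset ι} {Z : ι → Ω → ℝ} (hL2 : ∀ i ∈ t, MemLp (Z i) 2 P) :
    Integrable (fun ω => ∑ i ∈ t, (Z i ω - (∑ j ∈ t, Z j ω) / #t) ^ 2) P := by
  have hmean : MemLp (fun ω => (∑ j ∈ t, Z j ω) / #t) 2 P := by
    simpa only [div_eq_mul_inv] using (memLp_finsetSum t hL2).mul_const _
  exact integrable_finsetSum _ fun i hi => ((hL2 i hi).sub hmean).integrable_sq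

noncomputable def lindebergRatio {Ω ι : Type*} [MeasurableSpace Ω] (P : Measure Ω)
    (Z : ι → Ω → ℝ) (t : Finset ι) (δ : ℝ) : ℝ :=
  (∑ i ∈ t, ∫ ω, Z i ω ^ 2 ∂P)⁻¹ * ∑ i ∈ t,
    ∫ ω in {ω | δ * √(∑ j ∈ t, ∫ ω', Z j ω' ^ 2 ∂P) ≤ |Z i ω|}, Z i ω ^ 2 ∂P

section

variable {Ω : Type*} [MeasurableSpace Ω] {P : Measure Ω} [IsProbabilityMeasure P]

theorem integral_abs_sub_integral_le_sqrt_variance {X : Ω → ℝ} (hX : MemLp X 2 P) :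
    ∫ ω, |X ω - ∫ ω', X ω' ∂P| ∂P ≤ √(Var[X; P]) := by
  have hY : MemLp (fun ω => |X ω - ∫ ω', X ω' ∂P|) 2 P := (hX.sub (memLp_const _)).abs
  have h := variance_nonneg (fun ω => |X ω - ∫ ω', X ω' ∂P|) P
  rw [variance_eq_sub hY] at h
  refine Real.le_sqrt_of_sq_le ?_
  rw [variance_eq_integral hX.aemeasurable]
  simpa only [Pi.pow_apply, sq_abs, sub_nonneg] using h

theorem integral_sq_sum_of_pairwise_indepFun {ι : Type*} {t : Finset ι} {Z : ι → Ω → ℝ}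
    (hZ : ∀ i ∈ t, MemLp (Z i) 2 P) (hmean : ∀ i ∈ t, ∫ ω, Z i ω ∂P = 0)
    (hindep : (t : Set ι).Pairwise fun i j => Z i ⟂ᵢ[P] Z j) :
    ∫ ω, (∑ i ∈ t, Z i ω) ^ 2 ∂P = ∑ i ∈ t, ∫ ω, Z i ω ^ 2 ∂P := by
  have hsum : ∫ ω, (∑ i ∈ t, Z i) ω ∂P = 0 := by
    simp only [Finset.sum_apply]
    rw [integral_finsetSum _ fun i hi => (hZ i hi).integrable one_le_two]
    exact sum_eq_zero hmean
  have h := IndepFun.variance_sum hZ hindep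
  rw [variance_of_integral_eq_zero (memLp_finsetSum' t hZ).aemeasurable hsum] at h
  rw [sum_congr rfl fun i hi =>
    (variance_of_integral_eq_zero (hZ i hi).aemeasurable (hmean i hi)).symm]
  simpa only [Finset.sum_apply] using h

theorem variance_indicator_Iio_comp_le {X : Ω → ℝ} (hX : Integrable X P) (hX0 : 0 ≤ᵐ[P] X)
    {c : ℝ} (hc : 0 ≤ c) : Var[(Set.Iio c).indicator id ∘ X; P] ≤ c * ∫ ω, X ω ∂P := by
  have hmeas : Measurable ((Set.Iio c).indicator (id : ℝ → ℝ)) :=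
    measurable_id.indicator measurableSet_Iio
  calc Var[(Set.Iio c).indicator id ∘ X; P]
      ≤ ∫ ω, ((Set.Iio c).indicator id (X ω)) ^ 2 ∂P :=
        variance_le_expectation_sq (hmeas.comp_aemeasurable hX.aemeasurable).aestronglyMeasurable
    _ ≤ ∫ ω, c * X ω ∂P := by
      refine integral_mono_of_nonneg (.of_forall fun ω => sq_nonneg _) (hX.const_mul c) ?_
      filter_upwards [hX0] with ω (hω : 0 ≤ X ω)
      by_cases h : X ω < c
      · simp only [Set.indicator_of_mem (Set.mem_Iio.2 h), id]
        nlinarith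
      · simpa [Set.indicator_of_notMem (fun h' => h (Set.mem_Iio.1 h'))] using mul_nonneg hc hω
    _ = c * ∫ ω, X ω ∂P := integral_const_mul c _

theorem integral_abs_add_sub_integral_le {Y V : Ω → ℝ} (hY : MemLp Y 2 P) (hV : Integrable V P)
    (hV0 : 0 ≤ᵐ[P] V) :
    ∫ ω, |Y ω + V ω - ∫ ω', (Y ω' + V ω') ∂P| ∂P ≤ √(Var[Y; P]) + 2 * ∫ ω, V ω ∂P := by
  have hYint := hY.integrable one_le_two
  have hdev : Integrable (fun ω => |Y ω - ∫ ω', Y ω' ∂P|) P := (hYint.sub (integrable_const _)).abs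
  have hV' : Integrable (fun ω => V ω + ∫ ω', V ω' ∂P) P := hV.add (integrable_const _)
  calc ∫ ω, |Y ω + V ω - ∫ ω', (Y ω' + V ω') ∂P| ∂P
      ≤ ∫ ω, |Y ω - ∫ ω', Y ω' ∂P| + (V ω + ∫ ω', V ω' ∂P) ∂P := by
        refine integral_mono_of_nonneg (.of_forall fun ω => abs_nonneg _) (hdev.add hV') ?_
        filter_upwards [hV0] with ω (hω : 0 ≤ V ω)
        rw [integral_add hYint hV]
        have := integral_nonneg_of_ae hV0
        exact abs_le.2 ⟨by linarith [neg_abs_le (Y ω - ∫ ω', Y ω' ∂P)],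
          by linarith [le_abs_self (Y ω - ∫ ω', Y ω' ∂P)]⟩
    _ = ∫ ω, |Y ω - ∫ ω', Y ω' ∂P| ∂P + 2 * ∫ ω, V ω ∂P := by
        rw [integral_add hdev hV', integral_add hV (integrable_const _), integral_const,
          probReal_univ, one_smul]
        ring
    _ ≤ √(Var[Y; P]) + 2 * ∫ ω, V ω ∂P := by
        grw [integral_abs_sub_integral_le_sqrt_variance hY]

theorem integral_abs_sum_sub_sum_integral_le {ι : Type*} {t : Finset ι} {X : ι → Ω → ℝ}
    (hX : ∀ i ∈ t, Integrable (X i) P) (hX0 : ∀ i ∈ t, 0 ≤ᵐ[P] X i)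
    (hindep : (t : Set ι).Pairwise fun i j => X i ⟂ᵢ[P] X j) {c : ℝ} (hc : 0 ≤ c) :
    ∫ ω, |∑ i ∈ t, X i ω - ∑ i ∈ t, ∫ ω', X i ω' ∂P| ∂P ≤
      √(c * ∑ i ∈ t, ∫ ω, X i ω ∂P) + 2 * ∑ i ∈ t, ∫ ω in {ω | c ≤ X i ω}, X i ω ∂P := by
  have hg : Measurable ((Set.Iio c).indicator (id : ℝ → ℝ)) :=
    measurable_id.indicator measurableSet_Iio
  set W : ι → Ω → ℝ := fun i => (Set.Iio c).indicator id ∘ X i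
  set T : ι → Ω → ℝ := fun i => {ω | c ≤ X i ω}.indicator (X i)
  have hWT : ∀ i ω, X i ω = W i ω + T i ω := fun i ω => by
    by_cases h : X i ω < c
    · simp [W, T, h]
    · simp [W, T, h, not_lt.1 h]
  have hWmem : ∀ i ∈ t, MemLp (W i) 2 P := fun i hi => by
    refine MemLp.of_bound (hg.comp_aemeasurable (hX i hi).aemeasurable).aestronglyMeasurable c ?_
    filter_upwards [hX0 i hi] with ω (hω : 0 ≤ X i ω)
    by_cases h : X i ω < c
    · simp [W, h, abs_of_nonneg hω, h.le]
    · simp [W, h, hc]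
  have hsets : ∀ i ∈ t, NullMeasurableSet {ω | c ≤ X i ω} P := fun i hi =>
    nullMeasurableSet_le aemeasurable_const (hX i hi).aemeasurable
  have hTint : ∀ i ∈ t, Integrable (T i) P := fun i hi => (hX i hi).indicator₀ (hsets i hi)
  have hT0 : ∀ i ω, 0 ≤ T i ω := fun i ω => by
    by_cases h : c ≤ X i ω
    · simp [T, h, hc.trans h]
    · simp [T, h]
  have hWsum : Var[∑ i ∈ t, W i; P] ≤ c * ∑ i ∈ t, ∫ ω, X i ω ∂P := by
    rw [IndepFun.variance_sum hWmem (hindep.mono' fun i j h => h.comp hg hg), mul_sum]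
    exact sum_le_sum fun i hi => variance_indicator_Iio_comp_le (hX i hi) (hX0 i hi) hc
  have hTsum : ∫ ω, ∑ i ∈ t, T i ω ∂P = ∑ i ∈ t, ∫ ω in {ω | c ≤ X i ω}, X i ω ∂P := by
    rw [integral_finsetSum _ hTint]
    exact sum_congr rfl fun i hi => integral_indicator₀ (hsets i hi)
  have hsplit : ∀ ω, ∑ i ∈ t, X i ω = (∑ i ∈ t, W i) ω + ∑ i ∈ t, T i ω := fun ω => by
    simp only [Finset.sum_apply, ← sum_add_distrib, ← hWT]
  have key := integral_abs_add_sub_integral_le (memLp_finsetSum' t hWmem)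
    (integrable_finsetSum _ hTint) (.of_forall fun ω => sum_nonneg fun i _ => hT0 i ω)
  simp only [← hsplit, integral_finsetSum _ hX, hTsum] at key
  grw [key, hWsum]

theorem integral_abs_sum_sq_sub_le {ι : Type*} {t : Finset ι} {Z : ι → Ω → ℝ}
    (hL2 : ∀ i ∈ t, MemLp (Z i) 2 P) (hindep : (t : Set ι).Pairwise fun i j => Z i ⟂ᵢ[P] Z j)
    {δ : ℝ} (hδ : 0 ≤ δ) :
    ∫ ω, |∑ i ∈ t, Z i ω ^ 2 - ∑ i ∈ t, ∫ ω', Z i ω' ^ 2 ∂P| ∂P ≤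
      δ * ∑ i ∈ t, ∫ ω, Z i ω ^ 2 ∂P + 2 * ∑ i ∈ t,
        ∫ ω in {ω | δ * √(∑ j ∈ t, ∫ ω', Z j ω' ^ 2 ∂P) ≤ |Z i ω|}, Z i ω ^ 2 ∂P := by
  set s := ∑ i ∈ t, ∫ ω, Z i ω ^ 2 ∂P
  have hs : 0 ≤ s := sum_nonneg fun i _ => integral_nonneg fun ω => sq_nonneg _
  have hsets : ∀ i, {ω | δ * √s ≤ |Z i ω|} = {ω | (δ * √s) ^ 2 ≤ Z i ω ^ 2} := fun i => by
    ext ω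
    show δ * √s ≤ |Z i ω| ↔ (δ * √s) ^ 2 ≤ Z i ω ^ 2
    rw [← sq_abs (Z i ω), sq_le_sq₀ (by positivity) (abs_nonneg _)]
  have hsqrt : √((δ * √s) ^ 2 * s) = δ * s := by
    rw [mul_pow, Real.sq_sqrt hs, mul_assoc, ← sq, Real.sqrt_mul (sq_nonneg δ), Real.sqrt_sq hδ,
      Real.sqrt_sq hs]
  simp only [hsets]
  grw [integral_abs_sum_sub_sum_integral_le (fun i hi => (hL2 i hi).integrable_sq)
    (fun i _ => .of_forall fun ω => sq_nonneg _)
    (hindep.mono' fun i j h => h.comp (measurable_id.pow_const 2) (measurable_id.pow_const 2))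
    (sq_nonneg (δ * √s)), hsqrt]

theorem integral_abs_inv_mul_sum_sub_average_sq_sub_one_le {ι : Type*} {t : Finset ι}
    {Z : ι → Ω → ℝ} (hL2 : ∀ i ∈ t, MemLp (Z i) 2 P) (hmean : ∀ i ∈ t, ∫ ω, Z i ω ∂P = 0)
    (hindep : (t : Set ι).Pairwise fun i j => Z i ⟂ᵢ[P] Z j)
    (hs : 0 < ∑ i ∈ t, ∫ ω, Z i ω ^ 2 ∂P) {δ : ℝ} (hδ : 0 ≤ δ) :
    ∫ ω, |(∑ i ∈ t, ∫ ω', Z i ω' ^ 2 ∂P)⁻¹ * ∑ i ∈ t, (Z i ω - (∑ j ∈ t, Z j ω) / #t) ^ 2 - 1| ∂P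
      ≤ δ + 2 * lindebergRatio P Z t δ + 1 / #t := by
  set s := ∑ i ∈ t, ∫ ω, Z i ω ^ 2 ∂P with hs_def
  have hdev : Integrable (fun ω => |∑ i ∈ t, Z i ω ^ 2 - s|) P :=
    ((integrable_finsetSum _ fun i hi => (hL2 i hi).integrable_sq).sub (integrable_const _)).abs
  have hsum : Integrable (fun ω => (∑ j ∈ t, Z j ω) ^ 2) P := (memLp_finsetSum t hL2).integrable_sq
  have hpoint : ∀ ω, |s⁻¹ * ∑ i ∈ t, (Z i ω - (∑ j ∈ t, Z j ω) / #t) ^ 2 - 1|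
      ≤ s⁻¹ * |∑ i ∈ t, Z i ω ^ 2 - s| + s⁻¹ * ((∑ j ∈ t, Z j ω) ^ 2 / #t) := fun ω => by
    have h : s⁻¹ * ∑ i ∈ t, (Z i ω - (∑ j ∈ t, Z j ω) / #t) ^ 2 - 1
        = s⁻¹ * (∑ i ∈ t, Z i ω ^ 2 - s) - s⁻¹ * ((∑ j ∈ t, Z j ω) ^ 2 / #t) := by
      rw [sum_sub_average_sq]
      field_simp
      ring
    rw [h]
    refine (abs_sub _ _).trans_eq ?_
    rw [abs_mul, abs_of_pos (inv_pos.2 hs), abs_of_nonneg (by positivity : (0 : ℝ) ≤ s⁻¹ * _)]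
  calc ∫ ω, |s⁻¹ * ∑ i ∈ t, (Z i ω - (∑ j ∈ t, Z j ω) / #t) ^ 2 - 1| ∂P
      ≤ ∫ ω, s⁻¹ * |∑ i ∈ t, Z i ω ^ 2 - s| + s⁻¹ * ((∑ j ∈ t, Z j ω) ^ 2 / #t) ∂P :=
        integral_mono_of_nonneg (.of_forall fun ω => abs_nonneg _)
          ((hdev.const_mul _).add ((hsum.div_const _).const_mul _)) (.of_forall hpoint)
    _ = s⁻¹ * ∫ ω, |∑ i ∈ t, Z i ω ^ 2 - s| ∂P + 1 / #t := by
        rw [integral_add (hdev.const_mul _) ((hsum.div_const _).const_mul _), integral_const_mul,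
          integral_const_mul, integral_div, integral_sq_sum_of_pairwise_indepFun hL2 hmean hindep,
          ← hs_def]
        field_simp
    _ ≤ δ + 2 * lindebergRatio P Z t δ + 1 / #t := by
        grw [integral_abs_sum_sq_sub_le hL2 hindep hδ, lindebergRatio, ← hs_def]
        field_simp
        rfl

end

theorem centered_sum_of_squares_to_one_general
    {Ω : Type*} [MeasurableSpace Ω] (P : Measure Ω) [IsProbabilityMeasure P]
    (Z : ℕ → Ω → ℝ) (σ2 : ℕ → ℝ)
    (hindep : iIndepFun Z P)
    (hL2 : ∀ i, MemLp (Z i) 2 P)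
    (hmean : ∀ i, ∫ ω, Z i ω ∂P = 0)
    (hvar : ∀ i, ∫ ω, (Z i ω) ^ 2 ∂P = σ2 i)
    (hpos : ∀ i, 0 < σ2 i)
    (hLind : ∀ ε > (0 : ℝ), Tendsto (fun n =>
      (∑ i ∈ Finset.range n, σ2 i)⁻¹ *
        ∑ i ∈ Finset.range n,
          ∫ ω in {ω | ε * Real.sqrt (∑ j ∈ Finset.range n, σ2 j) ≤ |Z i ω|}, (Z i ω) ^ 2 ∂P)
      atTop (nhds 0)) :
    ∀ ε > (0 : ℝ), Tendsto (fun n =>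
      P {ω | ε ≤ |(∑ i ∈ Finset.range n, σ2 i)⁻¹ *
        ∑ i ∈ Finset.range n, (Z i ω - (∑ j ∈ Finset.range n, Z j ω) / n) ^ 2 - 1|})
      atTop (nhds 0) := by
  obtain rfl : (fun i => ∫ ω, Z i ω ^ 2 ∂P) = σ2 := funext hvar
  intro ε hε
  set Y : ℕ → Ω → ℝ := fun n ω => (∑ i ∈ range n, ∫ ω', Z i ω' ^ 2 ∂P)⁻¹ *
    ∑ i ∈ range n, (Z i ω - (∑ j ∈ range n, Z j ω) / n) ^ 2
  have hY : ∀ n, Integrable (Y n) P := fun n => by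
    have := (integrable_sum_sub_average_sq (t := range n) fun i _ => hL2 i).const_mul
      (∑ i ∈ range n, ∫ ω', Z i ω' ^ 2 ∂P)⁻¹
    simpa only [card_range] using this
  have hL1 : Tendsto (fun n => ∫ ω, |Y n ω - 1| ∂P) atTop (𝓝 0) :=
    tendsto_zero_of_forall_eventually_le_add
      (b := fun δ n => 2 * lindebergRatio P Z (range n) δ + 1 / n)
      (fun n => integral_nonneg fun ω => abs_nonneg _)
      (fun δ hδ => by
        have := ((hLind δ hδ).const_mul 2).add tendsto_one_div_atTop_nhds_zero_nat
        rwa [mul_zero, add_zero] at this)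
      fun δ hδ => (eventually_ge_atTop 1).mono fun n hn => by
        have := integral_abs_inv_mul_sum_sub_average_sq_sub_one_le (t := range n)
          (fun i _ => hL2 i) (fun i _ => hmean i) (fun i _ j _ hij => hindep.indepFun hij)
          (sum_pos (fun i _ => hpos i) (nonempty_range_iff.2 (by omega))) hδ.le
        simpa only [Y, card_range, add_assoc] using this
  have := tendstoInMeasure_of_tendsto_integral_abs_sub hY (integrable_const 1) hL1
  simpa only [Real.dist_eq] using tendstoInMeasure_iff_dist.1 this ε hε

/-- Under Lindeberg's condition, `s_n^{-2} ∑_{i=1}^n (Z_i − Z̄_n)²` converges to `1`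
in probability. -/
theorem centered_sum_of_squares_to_one
    {Ω : Type*} [MeasurableSpace Ω] (P : Measure Ω) [IsProbabilityMeasure P]
    (Z : ℕ → Ω → ℝ) (σ2 : ℕ → ℝ)
    (hmeas : ∀ i, Measurable (Z i))
    (hindep : iIndepFun Z P)
    (hL2 : ∀ i, MemLp (Z i) 2 P)
    (hmean : ∀ i, ∫ ω, Z i ω ∂P = 0)
    (hvar : ∀ i, ∫ ω, (Z i ω) ^ 2 ∂P = σ2 i)
    (hpos : ∀ i, 0 < σ2 i)
    (hLind : ∀ ε > (0 : ℝ), Tendsto (fun n =>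
      (∑ i ∈ Finset.range n, σ2 i)⁻¹ *
        ∑ i ∈ Finset.range n,
          ∫ ω in {ω | ε * Real.sqrt (∑ j ∈ Finset.range n, σ2 j) ≤ |Z i ω|}, (Z i ω) ^ 2 ∂P)
      atTop (nhds 0)) :
    ∀ ε > (0 : ℝ), Tendsto (fun n =>
      P {ω | ε ≤ |(∑ i ∈ Finset.range n, σ2 i)⁻¹ *
        ∑ i ∈ Finset.range n, (Z i ω - (∑ j ∈ Finset.range n, Z j ω) / n) ^ 2 - 1|})
      atTop (nhds 0) :=
  centered_sum_of_squares_to_one_general P Z σ2 hindep hL2 hmean hvar hpos hLind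
end

section
/- As n → ∞, max_{0 ≤ k ≤ n} | Σ_{i=1}^k (Z_i² − σ_i²) | / s_n² converges to 0 in probability; that is, for every ε > 0, P( max_{0 ≤ k ≤ n} | Σ_{i=1}^k (Z_i² − σ_i²) | ≥ ε s_n² ) → 0. -/
open MeasureTheory ProbabilityTheory Filter
open scoped Classical

/-!
Split each `Z_i²` at `|Z_i| = δ s_n`. The truncated squares are independent with total
variance at most `δ² s_n⁴` (Chebyshev), while by Lindeberg the tails have total mean `o(s_n²)`
(Markov); this makes every single partial sum negligible. Since `∑ Z_i²` is nondecreasing and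
`max_{i<n} σ_i² = o(s_n²)`, the maximum over `k ≤ n` is controlled, up to `ε s_n² / 4`, by the
partial sums at the `O(1/ε)` indices where `s_k²` first crosses a multiple of `ε s_n² / 8`.
-/

open Finset Topology

section Truncation

variable (t : ℝ)

noncomputable def truncSq (x : ℝ) : ℝ := if |x| < t then x ^ 2 else 0

noncomputable def tailSq (x : ℝ) : ℝ := if t ≤ |x| then x ^ 2 else 0

lemma measurable_truncSq : Measurable (truncSq t) :=
  Measurable.ite (measurableSet_lt measurable_abs measurable_const) (measurable_id.pow_const 2)
    measurable_const

lemma measurable_tailSq : Measurable (tailSq t) :=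
  Measurable.ite (measurableSet_le measurable_const measurable_abs) (measurable_id.pow_const 2)
    measurable_const

lemma truncSq_nonneg (x : ℝ) : 0 ≤ truncSq t x := by
  unfold truncSq; split_ifs <;> positivity

lemma tailSq_nonneg (x : ℝ) : 0 ≤ tailSq t x := by
  unfold tailSq; split_ifs <;> positivity

lemma truncSq_add_tailSq (x : ℝ) : truncSq t x + tailSq t x = x ^ 2 := by
  unfold truncSq tailSq; split_ifs <;> first | (exfalso; linarith) | ring

lemma tailSq_le_sq (x : ℝ) : tailSq t x ≤ x ^ 2 := by
  linarith [truncSq_add_tailSq t x, truncSq_nonneg t x]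

lemma truncSq_le (x : ℝ) : truncSq t x ≤ t ^ 2 := by
  unfold truncSq
  split_ifs with h
  · exact (sq_lt_sq.2 (h.trans_le (le_abs_self t))).le
  · positivity

lemma sq_truncSq_le (x : ℝ) : truncSq t x ^ 2 ≤ t ^ 2 * truncSq t x := by
  rw [sq]; exact mul_le_mul_of_nonneg_right (truncSq_le t x) (truncSq_nonneg t x)

end Truncation

lemma measure_ge_le_ofReal_integral_div {α : Type*} [MeasurableSpace α] {μ : Measure α}
    [IsFiniteMeasure μ] {f : α → ℝ} (hf₀ : 0 ≤ᵐ[μ] f) (hf : Integrable f μ) {b : ℝ} (hb : 0 < b) :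
    μ {x | b ≤ f x} ≤ ENNReal.ofReal ((∫ x, f x ∂μ) / b) := by
  rw [← ofReal_measureReal]
  exact ENNReal.ofReal_le_ofReal ((le_div_iff₀' hb).2 (mul_meas_ge_le_integral_of_nonneg hf₀ hf b))

section TruncatedMoments

variable {Ω : Type*} [MeasurableSpace Ω] {P : Measure Ω} {X : Ω → ℝ} (t : ℝ)

lemma memLp_truncSq_comp [IsFiniteMeasure P] (hX : AEMeasurable X P) (p : ENNReal) :
    MemLp (fun ω => truncSq t (X ω)) p P :=
  MemLp.of_bound ((measurable_truncSq t).comp_aemeasurable hX).aestronglyMeasurable (t ^ 2)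
    (Eventually.of_forall fun ω => by
      rw [Real.norm_eq_abs, abs_of_nonneg (truncSq_nonneg t _)]; exact truncSq_le t _)

lemma integrable_tailSq_comp (hX : MemLp X 2 P) : Integrable (fun ω => tailSq t (X ω)) P :=
  hX.integrable_sq.mono'
    ((measurable_tailSq t).comp_aemeasurable hX.aemeasurable).aestronglyMeasurable
    (Eventually.of_forall fun ω => by
      rw [Real.norm_eq_abs, abs_of_nonneg (tailSq_nonneg t _)]; exact tailSq_le_sq t _)

lemma integral_truncSq_add_integral_tailSq [IsFiniteMeasure P] (hX : MemLp X 2 P) :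
    ∫ ω, truncSq t (X ω) ∂P + ∫ ω, tailSq t (X ω) ∂P = ∫ ω, X ω ^ 2 ∂P := by
  rw [← integral_add ((memLp_truncSq_comp t hX.aemeasurable 1).integrable le_rfl)
    (integrable_tailSq_comp t hX)]
  simp only [truncSq_add_tailSq]

lemma integral_tailSq_comp (hX : AEMeasurable X P) :
    ∫ ω, tailSq t (X ω) ∂P = ∫ ω in {ω | t ≤ |X ω|}, X ω ^ 2 ∂P := by
  rw [← integral_indicator₀ (nullMeasurableSet_le aemeasurable_const hX.abs)]
  simp only [Set.indicator_apply, Set.mem_ofPred_eq, tailSq]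

lemma integral_truncSq_comp_le [IsProbabilityMeasure P] (hX : AEMeasurable X P) :
    ∫ ω, truncSq t (X ω) ∂P ≤ t ^ 2 := by
  simpa using integral_mono ((memLp_truncSq_comp t hX 1).integrable le_rfl)
    (integrable_const (t ^ 2)) fun ω => truncSq_le t (X ω)

lemma variance_truncSq_comp_le [IsProbabilityMeasure P] (hX : MemLp X 2 P) :
    variance (fun ω => truncSq t (X ω)) P ≤ t ^ 2 * ∫ ω, X ω ^ 2 ∂P := by
  have hY := memLp_truncSq_comp t hX.aemeasurable 2 (P := P)
  calc variance (fun ω => truncSq t (X ω)) P ≤ ∫ ω, truncSq t (X ω) ^ 2 ∂P :=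
        variance_le_expectation_sq hY.aestronglyMeasurable
    _ ≤ ∫ ω, t ^ 2 * truncSq t (X ω) ∂P :=
        integral_mono hY.integrable_sq ((hY.integrable one_le_two).const_mul _)
          fun ω => sq_truncSq_le t (X ω)
    _ = t ^ 2 * ∫ ω, truncSq t (X ω) ∂P := integral_const_mul _ _
    _ ≤ t ^ 2 * ∫ ω, X ω ^ 2 ∂P := by
        refine mul_le_mul_of_nonneg_left ?_ (sq_nonneg t)
        have htail : 0 ≤ ∫ ω, tailSq t (X ω) ∂P := integral_nonneg fun ω => tailSq_nonneg t _
        linarith [integral_truncSq_add_integral_tailSq t hX]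

lemma variance_sum_truncSq_comp_le {ι : Type*} [IsProbabilityMeasure P] {Z : ι → Ω → ℝ}
    (hindep : iIndepFun Z P) (hL2 : ∀ i, MemLp (Z i) 2 P) (s : Finset ι) :
    variance (∑ i ∈ s, fun ω => truncSq t (Z i ω)) P ≤ t ^ 2 * ∑ i ∈ s, ∫ x, Z i x ^ 2 ∂P := by
  rw [IndepFun.variance_sum (fun i _ => memLp_truncSq_comp t (hL2 i).aemeasurable 2)
    fun i _ j _ hij => (hindep.indepFun hij).comp (measurable_truncSq t) (measurable_truncSq t),
    mul_sum]
  exact sum_le_sum fun i _ => variance_truncSq_comp_le t (hL2 i)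

lemma measure_abs_sum_sq_sub_integral_ge_le {ι : Type*} [IsProbabilityMeasure P]
    {Z : ι → Ω → ℝ} (hindep : iIndepFun Z P) (hL2 : ∀ i, MemLp (Z i) 2 P) (s : Finset ι)
    {a b : ℝ} (ha : 0 < a) (hb : 0 < b) :
    P {ω | a + b + ∑ i ∈ s, ∫ x, tailSq t (Z i x) ∂P
        ≤ |∑ i ∈ s, (Z i ω ^ 2 - ∫ x, Z i x ^ 2 ∂P)|}
      ≤ ENNReal.ofReal (t ^ 2 * (∑ i ∈ s, ∫ x, Z i x ^ 2 ∂P) / a ^ 2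
          + (∑ i ∈ s, ∫ x, tailSq t (Z i x) ∂P) / b) := by
  set W : Ω → ℝ := ∑ i ∈ s, fun ω => truncSq t (Z i ω) with hW_def
  set R : Ω → ℝ := fun ω => ∑ i ∈ s, tailSq t (Z i ω)
  set L := ∑ i ∈ s, ∫ x, tailSq t (Z i x) ∂P
  have hW : MemLp W 2 P := memLp_finsetSum' _ fun i _ => memLp_truncSq_comp t (hL2 i).aemeasurable 2
  have hR : Integrable R P := integrable_finsetSum _ fun i _ => integrable_tailSq_comp t (hL2 i)
  have hR₀ : ∀ ω, 0 ≤ R ω := fun ω => sum_nonneg fun i _ => tailSq_nonneg t _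
  have hL₀ : 0 ≤ L := sum_nonneg fun i _ => integral_nonneg fun _ => tailSq_nonneg t _
  have hRL : ∫ ω, R ω ∂P = L := integral_finsetSum _ fun i _ => integrable_tailSq_comp t (hL2 i)
  have hvarW := variance_sum_truncSq_comp_le t hindep hL2 s
  have hsplit : ∀ ω, ∑ i ∈ s, (Z i ω ^ 2 - ∫ x, Z i x ^ 2 ∂P)
      = (W ω - ∫ x, W x ∂P) + (R ω - L) := fun ω => by
    have hWint : ∫ x, W x ∂P = ∑ i ∈ s, ∫ x, truncSq t (Z i x) ∂P := by
      simp only [hW_def, Finset.sum_apply]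
      rw [integral_finsetSum _ fun i _ =>
        (memLp_truncSq_comp t (hL2 i).aemeasurable 1).integrable le_rfl]
    rw [hWint, hW_def, Finset.sum_apply, ← sum_sub_distrib, ← sum_sub_distrib,
      ← sum_add_distrib]
    refine sum_congr rfl fun i _ => ?_
    rw [← truncSq_add_tailSq t (Z i ω), ← integral_truncSq_add_integral_tailSq t (hL2 i)]
    ring
  have hincl : {ω | a + b + L ≤ |∑ i ∈ s, (Z i ω ^ 2 - ∫ x, Z i x ^ 2 ∂P)|}
      ⊆ {ω | a ≤ |W ω - ∫ x, W x ∂P|} ∪ {ω | b ≤ R ω} := by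
    intro ω hω
    by_contra hnot
    simp only [Set.mem_union, Set.mem_ofPred_eq, not_or, not_le, hsplit] at hω hnot
    have hRL' : |R ω - L| ≤ R ω + L := abs_le.2 ⟨by linarith [hR₀ ω], by linarith⟩
    linarith [abs_add_le (W ω - ∫ x, W x ∂P) (R ω - L)]
  calc _ ≤ P {ω | a ≤ |W ω - ∫ x, W x ∂P|} + P {ω | b ≤ R ω} :=
        (measure_mono hincl).trans (measure_union_le _ _)
    _ ≤ ENNReal.ofReal (variance W P / a ^ 2) + ENNReal.ofReal (L / b) := by
        gcongr
        · exact meas_ge_le_variance_div_sq hW ha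
        · exact hRL ▸ measure_ge_le_ofReal_integral_div (Eventually.of_forall hR₀) hR hb
    _ ≤ _ := by
        rw [← ENNReal.ofReal_add (by positivity [variance_nonneg W P]) (by positivity)]
        gcongr

end TruncatedMoments

section HitIndex

variable (σ : ℕ → ℝ) (n : ℕ) (c : ℝ)

noncomputable def hitIndex : ℕ :=
  Nat.find (⟨n, Or.inr le_rfl⟩ : ∃ m, c ≤ ∑ i ∈ range m, σ i ∨ n ≤ m)

lemma hitIndex_spec : c ≤ ∑ i ∈ range (hitIndex σ n c), σ i ∨ n ≤ hitIndex σ n c :=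
  Nat.find_spec (⟨n, Or.inr le_rfl⟩ : ∃ m, c ≤ ∑ i ∈ range m, σ i ∨ n ≤ m)

lemma sum_range_lt_of_lt_hitIndex {m : ℕ} (hm : m < hitIndex σ n c) :
    ∑ i ∈ range m, σ i < c ∧ m < n := by
  simpa using Nat.find_min _ hm

lemma hitIndex_le : hitIndex σ n c ≤ n := Nat.find_min' _ (Or.inr le_rfl)

lemma hitIndex_le_of_le {k : ℕ} (hk : c ≤ ∑ i ∈ range k, σ i) : hitIndex σ n c ≤ k :=
  Nat.find_min' _ (Or.inl hk)

lemma le_sum_range_hitIndex (hc : c ≤ ∑ i ∈ range n, σ i) :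
    c ≤ ∑ i ∈ range (hitIndex σ n c), σ i := by
  rcases hitIndex_spec σ n c with h | h
  · exact h
  · rwa [le_antisymm (hitIndex_le σ n c) h]

lemma le_hitIndex_of_sum_range_lt (hσ : ∀ i, 0 ≤ σ i) {k : ℕ} (hkn : k ≤ n)
    (hk : ∑ i ∈ range k, σ i < c) : k ≤ hitIndex σ n c := by
  by_contra! hlt
  rcases hitIndex_spec σ n c with h | h
  · linarith [sum_mono_set_of_nonneg hσ (range_mono hlt.le)]
  · omega

lemma sum_range_hitIndex_le {h : ℝ} (hσh : ∀ i < n, σ i ≤ h) (hc : 0 ≤ c) (hh : 0 ≤ h) :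
    ∑ i ∈ range (hitIndex σ n c), σ i ≤ c + h := by
  cases hm : hitIndex σ n c with
  | zero => simp only [range_zero, sum_empty]; positivity
  | succ m =>
    obtain ⟨hsum, hmn⟩ := sum_range_lt_of_lt_hitIndex σ n c (m := m) (by omega)
    rw [sum_range_succ]
    linarith [hσh m hmn]

end HitIndex

/-- As `x ≥ 0`, the sums `∑ (x i - σ i)` drop by at most the increase of `∑ σ i`; so at `k` they
are within `2 h` of their value at the hitting index of the level `j * h` just below or just above
`σ 0 + ⋯ + σ (k-1)`. -/
lemma exists_abs_sum_range_le_abs_sum_range_hitIndex (x σ : ℕ → ℝ) (hx : ∀ i, 0 ≤ x i)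
    (hσ : ∀ i, 0 ≤ σ i) {n M : ℕ} {h : ℝ} (hh : 0 < h) (hσh : ∀ i < n, σ i ≤ h)
    (hM : ∑ i ∈ range n, σ i ≤ M * h) {k : ℕ} (hkn : k ≤ n) :
    ∃ j ≤ M + 1, |∑ i ∈ range k, (x i - σ i)|
      ≤ |∑ i ∈ range (hitIndex σ n (j * h)), (x i - σ i)| + 2 * h := by
  set S : ℕ → ℝ := fun m => ∑ i ∈ range m, σ i
  set T : ℕ → ℝ := fun m => ∑ i ∈ range m, (x i - σ i)
  have hT : ∀ {a b : ℕ}, a ≤ b → T a - T b ≤ S b - S a := fun hab => by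
    simp only [T, S, sum_sub_distrib]
    linarith [sum_mono_set_of_nonneg hx (range_mono hab)]
  have hSk : S k ≤ S n := sum_mono_set_of_nonneg hσ (range_mono hkn)
  have hSk₀ : 0 ≤ S k := sum_nonneg fun i _ => hσ i
  set j := ⌊S k / h⌋₊
  have hj : j * h ≤ S k := (le_div_iff₀ hh).1 (Nat.floor_le (by positivity))
  have hj' : S k < (j + 1 : ℕ) * h := by
    push_cast; exact (div_lt_iff₀ hh).1 (Nat.lt_floor_add_one _)
  have hj_succ : ((j + 1 : ℕ) : ℝ) * h = j * h + h := by push_cast; ring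
  have hjM : j ≤ M := Nat.floor_le_of_le ((div_le_iff₀ hh).2 (hSk.trans hM))
  rcases le_or_gt 0 (T k) with hTk | hTk
  · refine ⟨j + 1, by omega, ?_⟩
    have hkg : k ≤ hitIndex σ n ((j + 1 : ℕ) * h) :=
      le_hitIndex_of_sum_range_lt σ n _ hσ hkn hj'
    have hSg := sum_range_hitIndex_le σ n ((j + 1 : ℕ) * h) hσh (by positivity) hh.le
    rw [abs_of_nonneg hTk]
    linarith [hT hkg, le_abs_self (T (hitIndex σ n ((j + 1 : ℕ) * h)))]
  · refine ⟨j, by omega, ?_⟩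
    have hgk : hitIndex σ n (j * h) ≤ k := hitIndex_le_of_le σ n _ hj
    have hSg : j * h ≤ S (hitIndex σ n (j * h)) := le_sum_range_hitIndex σ n _ (hj.trans hSk)
    rw [abs_of_neg hTk]
    linarith [hT hgk, neg_abs_le (T (hitIndex σ n (j * h)))]

section Lindeberg

variable {Ω : Type*} [MeasurableSpace Ω] {P : Measure Ω} {Z : ℕ → Ω → ℝ} {σ2 : ℕ → ℝ}

def Lindeberg (P : Measure Ω) (Z : ℕ → Ω → ℝ) (σ2 : ℕ → ℝ) : Prop :=
  ∀ ε > (0 : ℝ), Tendsto (fun n =>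
    (∑ i ∈ range n, σ2 i)⁻¹ *
      ∑ i ∈ range n, ∫ ω in {ω | ε * √(∑ j ∈ range n, σ2 j) ≤ |Z i ω|}, (Z i ω) ^ 2 ∂P)
    atTop (𝓝 0)

lemma eventually_sum_range_pos (hpos : ∀ i, 0 < σ2 i) :
    ∀ᶠ n in atTop, 0 < ∑ i ∈ range n, σ2 i :=
  eventually_atTop.2 ⟨1, fun n hn => sum_pos (fun i _ => hpos i) (nonempty_range_iff.2 (by omega))⟩

lemma Lindeberg.eventually_sum_integral_tailSq_le (hL : Lindeberg P Z σ2)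
    (hZ : ∀ i, AEMeasurable (Z i) P) (hpos : ∀ i, 0 < σ2 i) {δ a : ℝ} (hδ : 0 < δ) (ha : 0 < a) :
    ∀ᶠ n in atTop, ∑ i ∈ range n, ∫ ω, tailSq (δ * √(∑ j ∈ range n, σ2 j)) (Z i ω) ∂P
      ≤ a * ∑ i ∈ range n, σ2 i := by
  filter_upwards [(hL δ hδ).eventually (ge_mem_nhds ha), eventually_sum_range_pos hpos]
    with n hn hs
  simp only [integral_tailSq_comp _ (hZ _)]
  rw [inv_mul_le_iff₀ hs] at hn
  linarith

variable [IsProbabilityMeasure P]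

lemma Lindeberg.eventually_le_mul_sum_range (hL : Lindeberg P Z σ2) (hL2 : ∀ i, MemLp (Z i) 2 P)
    (hvar : ∀ i, ∫ ω, (Z i ω) ^ 2 ∂P = σ2 i) (hpos : ∀ i, 0 < σ2 i) {η : ℝ} (hη : 0 < η) :
    ∀ᶠ n in atTop, ∀ i < n, σ2 i ≤ η * ∑ j ∈ range n, σ2 j := by
  filter_upwards [hL.eventually_sum_integral_tailSq_le (fun i => (hL2 i).aemeasurable) hpos
    (Real.sqrt_pos.2 (half_pos hη)) (half_pos hη), eventually_sum_range_pos hpos]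
    with n htail hs i hi
  set t := √(η / 2) * √(∑ j ∈ range n, σ2 j)
  have ht : t ^ 2 = η / 2 * ∑ j ∈ range n, σ2 j := by
    rw [mul_pow, Real.sq_sqrt (half_pos hη).le, Real.sq_sqrt hs.le]
  have htail_i : ∫ ω, tailSq t (Z i ω) ∂P ≤ ∑ j ∈ range n, ∫ ω, tailSq t (Z j ω) ∂P :=
    single_le_sum (f := fun j => ∫ ω, tailSq t (Z j ω) ∂P)
      (fun j _ => integral_nonneg fun _ => tailSq_nonneg t _) (mem_range.2 hi)
  calc σ2 i = ∫ ω, truncSq t (Z i ω) ∂P + ∫ ω, tailSq t (Z i ω) ∂P := by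
        rw [integral_truncSq_add_integral_tailSq t (hL2 i), hvar]
    _ ≤ t ^ 2 + η / 2 * ∑ j ∈ range n, σ2 j :=
        add_le_add (integral_truncSq_comp_le t (hL2 i).aemeasurable) (htail_i.trans htail)
    _ = η * ∑ j ∈ range n, σ2 j := by rw [ht]; ring

lemma Lindeberg.tendsto_measure_abs_sum_range_sq_sub_ge (hL : Lindeberg P Z σ2)
    (hindep : iIndepFun Z P) (hL2 : ∀ i, MemLp (Z i) 2 P)
    (hvar : ∀ i, ∫ ω, (Z i ω) ^ 2 ∂P = σ2 i) (hpos : ∀ i, 0 < σ2 i) {c : ℝ} (hc : 0 < c)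
    {k : ℕ → ℕ} (hk : ∀ n, k n ≤ n) :
    Tendsto (fun n => P {ω | c * ∑ i ∈ range n, σ2 i
      ≤ |∑ i ∈ range (k n), ((Z i ω) ^ 2 - σ2 i)|}) atTop (𝓝 0) := by
  rw [ENNReal.tendsto_nhds_zero]
  intro ρ hρ
  obtain ⟨r, -, hr, hrρ⟩ := ENNReal.lt_iff_exists_real_btwn.1 hρ
  have hr₀ : 0 < r := ENNReal.ofReal_pos.1 hr
  -- `δ` makes the Chebyshev term `16 δ² / c²` equal to `r / 4`
  set δ := c * √r / 8
  have hZ : ∀ i, AEMeasurable (Z i) P := fun i => (hL2 i).aemeasurable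
  filter_upwards [hL.eventually_sum_integral_tailSq_le hZ hpos (δ := δ) (by positivity)
      (half_pos hc),
    hL.eventually_sum_integral_tailSq_le hZ hpos (δ := δ) (by positivity)
      (by positivity : 0 < c * r / 8),
    eventually_sum_range_pos hpos] with n htail htail' hs
  set s := ∑ i ∈ range n, σ2 i
  set t := δ * √s
  have ht : t ^ 2 = r / 64 * c ^ 2 * s := by
    rw [mul_pow, div_pow, mul_pow, Real.sq_sqrt hr₀.le, Real.sq_sqrt hs.le]; ring
  have hLk : ∑ i ∈ range (k n), ∫ ω, tailSq t (Z i ω) ∂P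
      ≤ ∑ i ∈ range n, ∫ ω, tailSq t (Z i ω) ∂P :=
    sum_mono_set_of_nonneg (fun i => integral_nonneg fun _ => tailSq_nonneg t _)
      (range_mono (hk n))
  have hSk : ∑ i ∈ range (k n), σ2 i ≤ s :=
    sum_mono_set_of_nonneg (fun i => (hpos i).le) (range_mono (hk n))
  have hcs : 0 < c * s / 4 := by positivity
  have hsub : {ω | c * s ≤ |∑ i ∈ range (k n), ((Z i ω) ^ 2 - σ2 i)|}
      ⊆ {ω | c * s / 4 + c * s / 4 + ∑ i ∈ range (k n), ∫ x, tailSq t (Z i x) ∂P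
        ≤ |∑ i ∈ range (k n), (Z i ω ^ 2 - ∫ x, Z i x ^ 2 ∂P)|} := by
    intro ω hω
    simp only [Set.mem_ofPred_eq, hvar] at hω ⊢
    linarith
  refine (measure_mono hsub).trans <| (measure_abs_sum_sq_sub_integral_ge_le t hindep hL2 _ hcs
    hcs).trans <| le_trans (ENNReal.ofReal_le_ofReal ?_) hrρ.le
  simp only [hvar]
  have hcheb : (t ^ 2 * ∑ i ∈ range (k n), σ2 i) / (c * s / 4) ^ 2 ≤ r / 4 := by
    rw [div_le_iff₀ (by positivity)]
    calc t ^ 2 * ∑ i ∈ range (k n), σ2 i ≤ t ^ 2 * s := by gcongr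
      _ = r / 4 * (c * s / 4) ^ 2 := by rw [ht]; ring
  have hmarkov : (∑ i ∈ range (k n), ∫ x, tailSq t (Z i x) ∂P) / (c * s / 4) ≤ r / 2 := by
    rw [div_le_iff₀ hcs]
    linarith
  linarith

lemma Lindeberg.eventually_measure_exists_abs_sum_range_ge_le_sum (hL : Lindeberg P Z σ2)
    (hL2 : ∀ i, MemLp (Z i) 2 P) (hvar : ∀ i, ∫ ω, (Z i ω) ^ 2 ∂P = σ2 i)
    (hpos : ∀ i, 0 < σ2 i) {ε : ℝ} (hε : 0 < ε) :
    ∀ᶠ n in atTop, P {ω | ∃ k ∈ range (n + 1),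
      ε * ∑ i ∈ range n, σ2 i ≤ |∑ i ∈ range k, ((Z i ω) ^ 2 - σ2 i)|}
      ≤ ∑ j ∈ range (⌈8 / ε⌉₊ + 2), P {ω | 3 * ε / 4 * ∑ i ∈ range n, σ2 i
        ≤ |∑ i ∈ range (hitIndex σ2 n (j * (ε / 8 * ∑ i ∈ range n, σ2 i))),
            ((Z i ω) ^ 2 - σ2 i)|} := by
  filter_upwards [hL.eventually_le_mul_sum_range hL2 hvar hpos (by positivity : 0 < ε / 8),
    eventually_sum_range_pos hpos] with n hσ hs
  have hM : ∑ i ∈ range n, σ2 i ≤ ⌈8 / ε⌉₊ * (ε / 8 * ∑ i ∈ range n, σ2 i) := by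
    calc ∑ i ∈ range n, σ2 i = 8 / ε * (ε / 8 * ∑ i ∈ range n, σ2 i) := by field_simp
      _ ≤ ⌈8 / ε⌉₊ * (ε / 8 * ∑ i ∈ range n, σ2 i) := by gcongr; exact Nat.le_ceil _
  refine (measure_mono ?_).trans (measure_biUnion_finset_le _ _)
  rintro ω ⟨k, hk, hTk⟩
  obtain ⟨j, hj, hle⟩ := exists_abs_sum_range_le_abs_sum_range_hitIndex (fun i => Z i ω ^ 2) σ2
    (fun i => sq_nonneg _) (fun i => (hpos i).le) (by positivity) hσ hM
    (Nat.lt_succ_iff.1 (mem_range.1 hk))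
  refine Set.mem_biUnion (x := j) (mem_range.2 (by omega)) ?_
  simp only [Set.mem_ofPred_eq]
  linarith

end Lindeberg

theorem max_partial_sums_of_squares_negligible_general
    {Ω : Type*} [MeasurableSpace Ω] (P : Measure Ω) [IsProbabilityMeasure P]
    (Z : ℕ → Ω → ℝ) (σ2 : ℕ → ℝ)
    (hindep : iIndepFun Z P)
    (hL2 : ∀ i, MemLp (Z i) 2 P)
    (hvar : ∀ i, ∫ ω, (Z i ω) ^ 2 ∂P = σ2 i)
    (hpos : ∀ i, 0 < σ2 i)
    (hLind : ∀ ε > (0 : ℝ), Tendsto (fun n =>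
      (∑ i ∈ Finset.range n, σ2 i)⁻¹ *
        ∑ i ∈ Finset.range n,
          ∫ ω in {ω | ε * Real.sqrt (∑ j ∈ Finset.range n, σ2 j) ≤ |Z i ω|}, (Z i ω) ^ 2 ∂P)
      atTop (nhds 0)) :
    ∀ ε > (0 : ℝ), Tendsto (fun n =>
      P {ω | ∃ k ∈ Finset.range (n+1),
        ε * ∑ i ∈ Finset.range n, σ2 i ≤ |∑ i ∈ Finset.range k, ((Z i ω) ^ 2 - σ2 i)|})
      atTop (nhds 0) := by
  intro ε hε
  have hL : Lindeberg P Z σ2 := hLind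
  have hbound := hL.eventually_measure_exists_abs_sum_range_ge_le_sum hL2 hvar hpos hε
  refine tendsto_of_tendsto_of_tendsto_of_le_of_le' tendsto_const_nhds ?_
    (Eventually.of_forall fun _ => zero_le) hbound
  simpa using tendsto_finsetSum _ fun (j : ℕ) _ =>
    hL.tendsto_measure_abs_sum_range_sq_sub_ge hindep hL2 hvar hpos (by positivity : 0 < 3 * ε / 4)
      (k := fun n => hitIndex σ2 n (j * (ε / 8 * ∑ i ∈ range n, σ2 i))) fun n => hitIndex_le _ _ _

/-- Under Lindeberg's condition,
`max_{0≤k≤n} |∑_{i=1}^k (Z_i² − σ_i²)| / s_n²` converges to 0 in probability. -/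
theorem max_partial_sums_of_squares_negligible
    {Ω : Type*} [MeasurableSpace Ω] (P : Measure Ω) [IsProbabilityMeasure P]
    (Z : ℕ → Ω → ℝ) (σ2 : ℕ → ℝ)
    (hmeas : ∀ i, Measurable (Z i))
    (hindep : iIndepFun Z P)
    (hL2 : ∀ i, MemLp (Z i) 2 P)
    (hmean : ∀ i, ∫ ω, Z i ω ∂P = 0)
    (hvar : ∀ i, ∫ ω, (Z i ω) ^ 2 ∂P = σ2 i)
    (hpos : ∀ i, 0 < σ2 i)
    (hLind : ∀ ε > (0 : ℝ), Tendsto (fun n =>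
      (∑ i ∈ Finset.range n, σ2 i)⁻¹ *
        ∑ i ∈ Finset.range n,
          ∫ ω in {ω | ε * Real.sqrt (∑ j ∈ Finset.range n, σ2 j) ≤ |Z i ω|}, (Z i ω) ^ 2 ∂P)
      atTop (nhds 0)) :
    ∀ ε > (0 : ℝ), Tendsto (fun n =>
      P {ω | ∃ k ∈ Finset.range (n+1),
        ε * ∑ i ∈ Finset.range n, σ2 i ≤ |∑ i ∈ Finset.range k, ((Z i ω) ^ 2 - σ2 i)|})
      atTop (nhds 0) :=
  max_partial_sums_of_squares_negligible_general P Z σ2 hindep hL2 hvar hpos hLind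
end
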